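/- arXiv:math/0611534 — 2 statements merged into one kernel-verified Lean document; each statement's English description precedes it below -/
import Mathlib

section
/- Let r₁, r₂ ≥ 1 and let m_{1,2} ≤ ⋯ ≤ m_{r₂,2} and m_{1,1} ≤ ⋯ ≤ m_{r₁,1} ≤ −1 be integers with m_{r₂,2} ≥ r₁. Then the element x_{α₂}(m_{1,2})⋯x_{α₂}(m_{r₂,2})·x_{α₁}(m_{1,1})⋯x_{α₁}(m_{r₁,1}) of U(n̄) is a ℂ-linear combination of elements x_{α₂}(m'_{1,2})⋯x_{α₂}(m'_{r₂,2})·x_{α₁}(m'_{1,1})⋯x_{α₁}(m'_{r₁,1}) with m'_{1,2} ≤ ⋯ ≤ m'_{r₂,2} ≤ r₁ − 1, m'_{1,1} ≤ ⋯ ≤ m'_{r₁,1} ≤ −1 and with the same total index sum (m'_{1,2} + ⋯ + m'_{r₁,1} = m_{1,2} + ⋯ + m_{r₁,1}), plus an element of the left ideal U(n̄)n̄⁺. -/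
open scoped TensorProduct

noncomputable section

/-- 3×3 complex matrices 𝔤𝔩(3,ℂ), with the commutator Lie bracket. -/
abbrev Mat3 : Type := Matrix (Fin 3) (Fin 3) ℂ

attribute [local instance 100] LieRing.ofAssociativeRing

lemma upperTri_mul {a b : Mat3} (ha : ∀ i j : Fin 3, j ≤ i → a i j = 0)
    (hb : ∀ i j : Fin 3, j ≤ i → b i j = 0) :
    ∀ i j : Fin 3, j ≤ i → (a * b) i j = 0 := by
  intro i j hij
  rw [Matrix.mul_apply]
  refine Finset.sum_eq_zero fun k _ => ?_
  by_cases hk : k ≤ i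
  · rw [ha i k hk, zero_mul]
  · rw [hb k j (hij.trans (not_le.mp hk).le), mul_zero]

/-- The Lie algebra 𝔫 of strictly upper triangular 3×3 complex matrices. -/
def strictUpper : LieSubalgebra ℂ Mat3 where
  carrier := {M : Mat3 | ∀ i j : Fin 3, j ≤ i → M i j = 0}
  add_mem' := fun {a b} ha hb i j hij => by
    simp only [Matrix.add_apply, ha i j hij, hb i j hij, add_zero]
  zero_mem' := fun i j _ => rfl
  smul_mem' := fun c a ha i j hij => by
    simp only [Matrix.smul_apply, ha i j hij, smul_zero]
  lie_mem' := fun {a b} ha hb i j hij => by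
    rw [Ring.lie_def, Matrix.sub_apply, upperTri_mul ha hb i j hij,
      upperTri_mul hb ha i j hij, sub_zero]

/-- x_{α₁} = E₁₂ ∈ 𝔫. -/
def xa1 : strictUpper :=
  ⟨Matrix.single 0 1 1, by
    intro i j hij
    fin_cases i <;> fin_cases j <;> simp_all [Matrix.single, Matrix.of_apply]⟩

/-- x_{α₂} = E₂₃ ∈ 𝔫. -/
def xa2 : strictUpper :=
  ⟨Matrix.single 1 2 1, by
    intro i j hij
    fin_cases i <;> fin_cases j <;> simp_all [Matrix.single, Matrix.of_apply]⟩

/-- x_{α₁+α₂} = E₁₃ ∈ 𝔫. -/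
def xa12 : strictUpper :=
  ⟨Matrix.single 0 2 1, by
    intro i j hij
    fin_cases i <;> fin_cases j <;> simp_all [Matrix.single, Matrix.of_apply]⟩

/-- The loop algebra n̄ = ℂ[t,t⁻¹] ⊗_ℂ 𝔫, with bracket
`[tᵐ ⊗ x, tⁿ ⊗ y] = t^{m+n} ⊗ [x,y]`. -/
abbrev loopN : Type := LaurentPolynomial ℂ ⊗[ℂ] strictUpper

/-- n̄ is a Lie algebra over ℂ (by restriction of scalars from ℂ[t,t⁻¹]). -/
instance : LieAlgebra ℂ loopN where
  lie_smul c x y := by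
    rw [← algebraMap_smul (LaurentPolynomial ℂ) c y,
      ← algebraMap_smul (LaurentPolynomial ℂ) c ⁅x, y⁆]
    exact lie_smul ((algebraMap ℂ (LaurentPolynomial ℂ)) c) x y

/-- The universal enveloping algebra U(n̄) over ℂ. -/
abbrev Uenv : Type := UniversalEnvelopingAlgebra ℂ loopN

/-- x(m) = tᵐ ⊗ x, viewed as an element of U(n̄). -/
def XX (x : strictUpper) (m : ℤ) : Uenv :=
  UniversalEnvelopingAlgebra.ι ℂ (LaurentPolynomial.T m ⊗ₜ[ℂ] x)

/-- The ordered monomial x(m₁)⋯x(m_r) ∈ U(n̄) attached to a single root vector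
`a` and a sequence of integers `m`. -/
def monom {r : ℕ} (a : strictUpper) (m : Fin r → ℤ) : Uenv :=
  (List.ofFn fun i => XX a (m i)).prod

/-- The left ideal U(n̄)n̄⁺ of U(n̄), generated by the x(m) with x ∈ 𝔫, m ≥ 0. -/
def UNplus : Ideal Uenv :=
  Ideal.span {u : Uenv | ∃ (x : strictUpper) (m : ℤ), 0 ≤ m ∧ u = XX x m}

/-- The truncated relation R^{[j]}_{t;m} = Σ_{m₁,m₂ ≤ m, m₁+m₂=t} x_{α_j}(m₁)x_{α_j}(m₂)
(here `a` stands for the root vector x_{α_j}). -/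
def Rtrunc (a : strictUpper) (t m : ℤ) : Uenv :=
  ∑ k ∈ Finset.Icc (t - m) m, XX a k * XX a (t - k)

/-- The two-sided ideal 𝒥 of U(n̄) generated by all R^{[j]}_{t;m}, j ∈ {1,2}. -/
def Jideal : TwoSidedIdeal Uenv :=
  TwoSidedIdeal.span {u : Uenv | ∃ t m : ℤ, u = Rtrunc xa1 t m ∨ u = Rtrunc xa2 t m}

/-- The difference two condition on a sequence m₁, …, m_r. -/
def diffTwo {r : ℕ} (m : Fin r → ℤ) : Prop :=
  ∀ i j : Fin r, (i : ℕ) + 1 = (j : ℕ) → m i + 2 ≤ m j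

/-!
Moving `x_{α₂}(b)` across `x_{α₁}(M) = ∏_{v ∈ M} x_{α₁}(v)` produces the terms
`x_{α₁}(M ∖ v) x_{α₁+α₂}(v + b)`, since `x_{α₁+α₂}` commutes with `x_{α₁}`. For `b ≥ 0` the
element `x_{α₁}(M) x_{α₂}(b)` lies in `U(n̄)n̄⁺`, so for `0 ≤ b ≤ r₁ - 1` these are linear
relations, modulo the span of the allowed monomials, among the elements
`x_{α₁}(A) x_{α₁+α₂}(k)` with `|A| = r₁ - 1` and all entries of `A` at most `-1`. A double
induction, on `r₁` and on the size of the entries of `A`, shows that these relations force every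
such element into that span. Hence a single `x_{α₂}(N)` with `N ≥ 0` in front of `x_{α₁}(M)` can
be replaced by factors `x_{α₂}(b)` with `b ≤ r₁ - 1`, and the `x_{α₂}`-factors are treated one at
a time from the left; every step preserves the total index sum.
-/

lemma XX_mul_sub_mul (x y : strictUpper) (m n : ℤ) :
    XX x m * XX y n - XX y n * XX x m = XX ⁅x, y⁆ (m + n) := by
  have h := (UniversalEnvelopingAlgebra.ι ℂ (L := loopN)).map_lie
    (LaurentPolynomial.T (R := ℂ) m ⊗ₜ[ℂ] x)
    (LaurentPolynomial.T (R := ℂ) n ⊗ₜ[ℂ] y)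
  rw [LieAlgebra.ExtendScalars.bracket_tmul, ← LaurentPolynomial.T_add, Ring.lie_def] at h
  exact h.symm

lemma XX_commute_of_lie_eq_zero {x y : strictUpper} (h : ⁅x, y⁆ = 0) (m n : ℤ) :
    Commute (XX x m) (XX y n) := by
  have hzero : XX 0 (m + n) = 0 := by rw [XX, TensorProduct.tmul_zero, map_zero]
  have := XX_mul_sub_mul x y m n
  rwa [h, hzero, sub_eq_zero] at this

lemma XX_commute_self (x : strictUpper) (m n : ℤ) : Commute (XX x m) (XX x n) :=
  XX_commute_of_lie_eq_zero (lie_self x) m n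

lemma lie_lie_xa1_xa2_xa1 : ⁅⁅xa1, xa2⁆, xa1⁆ = 0 := by
  apply Subtype.ext
  simp only [LieSubalgebra.coe_bracket, Ring.lie_def, xa1, xa2]
  simp

def xMon (x : strictUpper) (M : Multiset ℤ) : Uenv :=
  (M.map (XX x)).noncommProd fun a ha b hb _ => by
    obtain ⟨m, -, rfl⟩ := Multiset.mem_map.mp ha
    obtain ⟨n, -, rfl⟩ := Multiset.mem_map.mp hb
    exact XX_commute_self x m n

lemma xMon_zero (x : strictUpper) : xMon x 0 = 1 := rfl

lemma xMon_cons (x : strictUpper) (a : ℤ) (M : Multiset ℤ) :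
    xMon x (a ::ₘ M) = XX x a * xMon x M := by
  simp only [xMon, Multiset.map_cons, Multiset.noncommProd_cons]

lemma xMon_singleton (x : strictUpper) (a : ℤ) : xMon x {a} = XX x a := by
  rw [← Multiset.cons_zero, xMon_cons, xMon_zero, mul_one]

lemma xMon_add (x : strictUpper) (M M' : Multiset ℤ) :
    xMon x (M + M') = xMon x M * xMon x M' := by
  simp only [xMon, Multiset.map_add, Multiset.noncommProd_add]

lemma monom_eq_xMon {r : ℕ} (x : strictUpper) (m : Fin r → ℤ) :
    monom x m = xMon x (List.ofFn m) := by
  simp only [monom, xMon, Multiset.map_coe, Multiset.noncommProd_coe, List.map_ofFn]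
  rfl

lemma XX_commute_xMon {x y : strictUpper} (h : ⁅y, x⁆ = 0) (k : ℤ) (M : Multiset ℤ) :
    Commute (XX y k) (xMon x M) :=
  Multiset.noncommProd_commute _ _ _ fun _ ha => by
    obtain ⟨m, -, rfl⟩ := Multiset.mem_map.mp ha
    exact XX_commute_of_lie_eq_zero h k m

lemma XX_mul_xMon {x y : strictUpper} (h : ⁅⁅x, y⁆, x⁆ = 0) (b : ℤ) (M : Multiset ℤ) :
    XX y b * xMon x M = xMon x M * XX y b
      - (M.map fun v => xMon x (M.erase v) * XX ⁅x, y⁆ (v + b)).sum := by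
  induction M using Multiset.induction_on with
  | empty => simp [xMon_zero]
  | cons a M ih =>
    have hswap : XX y b * XX x a = XX x a * XX y b - XX ⁅x, y⁆ (a + b) := by
      rw [← XX_mul_sub_mul, sub_sub_cancel]
    have herase : ∀ v ∈ M, xMon x ((a ::ₘ M).erase v) * XX ⁅x, y⁆ (v + b)
        = XX x a * (xMon x (M.erase v) * XX ⁅x, y⁆ (v + b)) := fun v hv => by
      rw [Multiset.erase_cons_tail_of_mem hv, xMon_cons, mul_assoc]
    rw [xMon_cons, Multiset.map_cons, Multiset.sum_cons, Multiset.erase_cons_head,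
      Multiset.map_congr rfl herase, Multiset.sum_map_mul_left, ← mul_assoc, hswap, sub_mul,
      mul_assoc, ih, ← (XX_commute_xMon h _ M).eq]
    noncomm_ring

/-- `c A k` stands for the class of `x_{α₁}(A) x_{α₁+α₂}(k)` modulo a target space; the
relations are those that `XX_mul_xMon` provides there. -/
structure SatisfiesStraighteningRelations {V : Type*} [AddCommMonoid V] (n : ℕ)
    (c : Multiset ℤ → ℤ → V) : Prop where
  eq_zero_of_nonneg : ∀ A k, 0 ≤ k → c A k = 0
  sum_erase_eq_zero : ∀ M : Multiset ℤ, Multiset.card M = n + 1 → (∀ x ∈ M, x ≤ -1) →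
    ∀ b : ℤ, 0 ≤ b → b ≤ n → (M.map fun v => c (M.erase v) (v + b)).sum = 0

namespace SatisfiesStraighteningRelations

variable {V : Type*} [AddCommMonoid V] {n : ℕ} {c : Multiset ℤ → ℤ → V}

lemma shift (hc : SatisfiesStraighteningRelations (n + 1) c) (j : ℕ)
    (hj : ∀ i < j, ∀ B, Multiset.card B = n + 1 → (∀ x ∈ B, x ≤ -1) → c B (-(i + 1)) = 0) :
    SatisfiesStraighteningRelations n fun B l => c (-(j + 1) ::ₘ B) (l + 1) where
  eq_zero_of_nonneg B l hl := hc.eq_zero_of_nonneg _ _ (by omega)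
  sum_erase_eq_zero M hM hneg b hb0 hbn := by
    have h := hc.sum_erase_eq_zero (-(j + 1) ::ₘ M) (by simp [hM])
      (Multiset.forall_mem_cons.mpr ⟨by omega, hneg⟩) (b + 1) (by omega) (by push_cast; omega)
    have hhead : c M (-(j + 1) + (b + 1)) = 0 := by
      rcases le_or_gt (j : ℤ) b with hjb | hjb
      · exact hc.eq_zero_of_nonneg _ _ (by omega)
      · have := hj (j - b - 1).toNat (by omega) M hM hneg
        rwa [show (((j - b - 1).toNat : ℕ) : ℤ) = j - b - 1 by omega,
          show -((j : ℤ) - b - 1 + 1) = -(j + 1) + (b + 1) by ring] at this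
    rw [Multiset.map_cons, Multiset.sum_cons, Multiset.erase_cons_head, hhead, zero_add] at h
    rw [← h]
    refine congrArg Multiset.sum (Multiset.map_congr rfl fun v hv => ?_)
    rw [Multiset.erase_cons_tail_of_mem hv, add_assoc]

theorem eq_zero (hc : SatisfiesStraighteningRelations n c) {A : Multiset ℤ}
    (hA : Multiset.card A = n) (hneg : ∀ x ∈ A, x ≤ -1) (k : ℤ) : c A k = 0 := by
  induction n generalizing c A k with
  | zero =>
    rcases le_or_gt 0 k with hk | hk
    · exact hc.eq_zero_of_nonneg A k hk
    · rw [Multiset.card_eq_zero.mp hA]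
      simpa using hc.sum_erase_eq_zero {k} rfl
        (by simp only [Multiset.mem_singleton, forall_eq]; omega) 0 le_rfl le_rfl
  | succ n ih =>
    -- by strong induction on `j`, every value with a `-(j + 1)` in either argument vanishes
    have key : ∀ j : ℕ, (∀ B, Multiset.card B = n → (∀ x ∈ B, x ≤ -1) →
          ∀ l, c (-(j + 1) ::ₘ B) l = 0) ∧
        ∀ B, Multiset.card B = n + 1 → (∀ x ∈ B, x ≤ -1) → c B (-(j + 1)) = 0 := by
      intro j
      induction j using Nat.strong_induction_on with
      | _ j IH =>
        have hfirst : ∀ B, Multiset.card B = n → (∀ x ∈ B, x ≤ -1) →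
            ∀ l, c (-(j + 1) ::ₘ B) l = 0 := fun B hB hBneg l => by
          simpa using ih (hc.shift j fun i hi => (IH i hi).2) hB hBneg (l - 1)
        refine ⟨hfirst, fun B hB hBneg => ?_⟩
        have h := hc.sum_erase_eq_zero (-(j + 1) ::ₘ B) (by simp [hB])
          (Multiset.forall_mem_cons.mpr ⟨by omega, hBneg⟩) 0 le_rfl (by omega)
        rwa [Multiset.map_cons, Multiset.sum_cons, Multiset.erase_cons_head,
          Multiset.sum_eq_zero, add_zero, add_zero] at h
        intro x hx
        obtain ⟨v, hv, rfl⟩ := Multiset.mem_map.mp hx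
        rw [Multiset.erase_cons_tail_of_mem hv]
        exact hfirst _ (by simp [Multiset.card_erase_of_mem hv, hB])
          (fun y hy => hBneg y (Multiset.mem_of_mem_erase hy)) _
    obtain ⟨a, ha⟩ := Multiset.card_pos_iff_exists_mem.mp (by omega : 0 < Multiset.card A)
    have := (key (-a - 1).toNat).1 (A.erase a)
      (by simp [Multiset.card_erase_of_mem ha, hA])
      (fun y hy => hneg y (Multiset.mem_of_mem_erase hy)) k
    rwa [show -((((-a - 1).toNat : ℕ) : ℤ) + 1) = a by have := hneg a ha; omega,
      Multiset.cons_erase ha] at this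

end SatisfiesStraighteningRelations

lemma XX_mem_UNplus (x : strictUpper) {m : ℤ} (hm : 0 ≤ m) : XX x m ∈ UNplus :=
  Submodule.subset_span ⟨x, m, hm, rfl⟩

def truncMonomials (r2 r1 : ℕ) (s : ℤ) : Set Uenv :=
  {u | ∃ M2 M1 : Multiset ℤ, Multiset.card M2 = r2 ∧ Multiset.card M1 = r1 ∧
    (∀ x ∈ M2, x ≤ (r1 : ℤ) - 1) ∧ (∀ x ∈ M1, x ≤ -1) ∧ M2.sum + M1.sum = s ∧
    u = xMon xa2 M2 * xMon xa1 M1}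

def truncSpan (r2 r1 : ℕ) (s : ℤ) : Submodule ℂ Uenv :=
  Submodule.span ℂ (truncMonomials r2 r1 s) ⊔ UNplus.restrictScalars ℂ

lemma mem_truncSpan_of_mem_UNplus {r2 r1 : ℕ} {s : ℤ} {u : Uenv} (hu : u ∈ UNplus) :
    u ∈ truncSpan r2 r1 s :=
  Submodule.mem_sup_right hu

lemma xMon_mul_xMon_mem_truncSpan_of_le {r2 r1 : ℕ} {M2 M1 : Multiset ℤ}
    (h2 : Multiset.card M2 = r2) (h1 : Multiset.card M1 = r1)
    (hM2 : ∀ x ∈ M2, x ≤ (r1 : ℤ) - 1) (hM1 : ∀ x ∈ M1, x ≤ -1) :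
    xMon xa2 M2 * xMon xa1 M1 ∈ truncSpan r2 r1 (M2.sum + M1.sum) :=
  Submodule.mem_sup_left (Submodule.subset_span ⟨M2, M1, h2, h1, hM2, hM1, rfl, rfl⟩)

lemma mul_mem_truncSpan_of_forall {r2 r1 r2' r1' : ℕ} {s s' : ℤ} {a u : Uenv}
    (h : ∀ v ∈ truncMonomials r2 r1 s, a * v ∈ truncSpan r2' r1' s')
    (hu : u ∈ truncSpan r2 r1 s) : a * u ∈ truncSpan r2' r1' s' :=
  (sup_le (Submodule.span_le.mpr h)
      (fun _ hw => mem_truncSpan_of_mem_UNplus (UNplus.mul_mem_left a hw)) :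
    truncSpan r2 r1 s ≤ (truncSpan r2' r1' s').comap (LinearMap.mulLeft ℂ a)) hu

lemma xMon_mul_XX_mem_truncSpan (n : ℕ) {A : Multiset ℤ} (hA : Multiset.card A = n)
    (hneg : ∀ x ∈ A, x ≤ -1) (k : ℤ) :
    xMon xa1 A * XX ⁅xa1, xa2⁆ k ∈ truncSpan 1 (n + 1) (k + A.sum) := by
  set W := truncSpan 1 (n + 1) (k + A.sum)
  -- cut down to the weight of `W`, so that the relations hold for every `M` and `b`
  let c : Multiset ℤ → ℤ → Uenv ⧸ W := fun B l =>
    if l + B.sum = k + A.sum then W.mkQ (xMon xa1 B * XX ⁅xa1, xa2⁆ l) else 0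
  have hc : SatisfiesStraighteningRelations n c := by
    refine ⟨fun B l hl => ?_, fun M hM hMneg b hb0 hbn => ?_⟩
    · simp only [c]
      split_ifs
      · exact (Submodule.Quotient.mk_eq_zero W).mpr
          (mem_truncSpan_of_mem_UNplus (UNplus.mul_mem_left _ (XX_mem_UNplus _ hl)))
      · rfl
    · have hterm : ∀ v ∈ M, c (M.erase v) (v + b) = if b + M.sum = k + A.sum
          then W.mkQ (xMon xa1 (M.erase v) * XX ⁅xa1, xa2⁆ (v + b)) else 0 := fun v hv => by
        have := Multiset.sum_erase hv
        simp only [c, show v + b + (M.erase v).sum = b + M.sum by omega]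
      rw [Multiset.map_congr rfl hterm]
      split_ifs with hw
      · have hkey := XX_mul_xMon lie_lie_xa1_xa2_xa1 b M
        rw [eq_sub_iff_add_eq, add_comm, ← eq_sub_iff_add_eq] at hkey
        have hgen :=
          xMon_mul_xMon_mem_truncSpan_of_le (M2 := {b}) rfl hM (by simpa using hbn) hMneg
        rw [Multiset.sum_singleton, hw, xMon_singleton] at hgen
        rw [← Function.comp_def W.mkQ, ← Multiset.map_map, ← map_multiset_sum, hkey,
          Submodule.mkQ_apply, Submodule.Quotient.mk_eq_zero]
        exact sub_mem
          (mem_truncSpan_of_mem_UNplus (UNplus.mul_mem_left _ (XX_mem_UNplus _ hb0))) hgen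
      · simp
  simpa [c, W, Submodule.Quotient.mk_eq_zero] using hc.eq_zero hA hneg k

lemma XX_mul_xMon_mem_truncSpan_one (n : ℕ) (N : ℤ) {M : Multiset ℤ}
    (hM : Multiset.card M = n + 1) (hneg : ∀ x ∈ M, x ≤ -1) :
    XX xa2 N * xMon xa1 M ∈ truncSpan 1 (n + 1) (N + M.sum) := by
  rcases le_or_gt N n with hN | hN
  · simpa [xMon_singleton] using
      xMon_mul_xMon_mem_truncSpan_of_le (M2 := {N}) rfl hM (by simpa using hN) hneg
  · rw [XX_mul_xMon lie_lie_xa1_xa2_xa1]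
    refine sub_mem
      (mem_truncSpan_of_mem_UNplus (UNplus.mul_mem_left _ (XX_mem_UNplus _ (by omega))))
      (multiset_sum_mem _ fun u hu => ?_)
    obtain ⟨v, hv, rfl⟩ := Multiset.mem_map.mp hu
    have := xMon_mul_XX_mem_truncSpan n (A := M.erase v)
      (by simp [Multiset.card_erase_of_mem hv, hM])
      (fun y hy => hneg y (Multiset.mem_of_mem_erase hy)) (v + N)
    rwa [show v + N + (M.erase v).sum = N + M.sum by have := Multiset.sum_erase hv; omega] at this

lemma XX_mul_mem_truncSpan (n : ℕ) {r2 : ℕ} {s : ℤ} (N : ℤ) {u : Uenv}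
    (hu : u ∈ truncSpan r2 (n + 1) s) : XX xa2 N * u ∈ truncSpan (r2 + 1) (n + 1) (N + s) := by
  refine mul_mem_truncSpan_of_forall ?_ hu
  rintro _ ⟨M2, M1, h2, h1, hM2, hM1, hs, rfl⟩
  rw [← mul_assoc, (XX_commute_xMon (lie_self xa2) N M2).eq, mul_assoc]
  refine mul_mem_truncSpan_of_forall ?_ (XX_mul_xMon_mem_truncSpan_one n N h1 hM1)
  rintro _ ⟨M2', M1', h2', h1', hM2', hM1', hs', rfl⟩
  rw [← mul_assoc, ← xMon_add, show N + s = (M2 + M2').sum + M1'.sum by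
    rw [Multiset.sum_add]; omega]
  exact xMon_mul_xMon_mem_truncSpan_of_le (by simp [h2, h2']) h1'
    (fun x hx => (Multiset.mem_add.mp hx).elim (hM2 x) (hM2' x)) hM1'

lemma xMon_mul_xMon_mem_truncSpan (n : ℕ) (M2 : Multiset ℤ) {M1 : Multiset ℤ}
    (h1 : Multiset.card M1 = n + 1) (hneg : ∀ x ∈ M1, x ≤ -1) :
    xMon xa2 M2 * xMon xa1 M1 ∈ truncSpan (Multiset.card M2) (n + 1) (M2.sum + M1.sum) := by
  induction M2 using Multiset.induction_on with
  | empty => simpa using xMon_mul_xMon_mem_truncSpan_of_le (M2 := 0) rfl h1 (by simp) hneg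
  | cons N M2 ih =>
    rw [xMon_cons, mul_assoc, Multiset.card_cons, Multiset.sum_cons, add_assoc]
    exact XX_mul_mem_truncSpan n N ih

lemma Multiset.exists_monotone_coe_ofFn_eq {α : Type*} [LinearOrder α] {r : ℕ}
    (M : Multiset α) (h : Multiset.card M = r) :
    ∃ g : Fin r → α, Monotone g ∧ (List.ofFn g : Multiset α) = M := by
  subst h
  obtain ⟨g, hg⟩ : ∃ g : Fin (Multiset.card M) → α, List.ofFn g = M.sort (· ≤ ·) := by
    rw [← Multiset.length_sort (· ≤ ·)]
    exact ⟨_, List.ofFn_get _⟩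
  refine ⟨g, ?_, by rw [hg, Multiset.sort_eq]⟩
  rw [← List.sortedLE_ofFn_iff, hg]
  exact (Multiset.pairwise_sort M _).sortedLE

lemma truncMonomials_subset (r2 r1 : ℕ) (s : ℤ) :
    truncMonomials r2 r1 s ⊆ {u : Uenv | ∃ (m2' : Fin r2 → ℤ) (m1' : Fin r1 → ℤ),
      Monotone m2' ∧ Monotone m1' ∧ (∀ i, m2' i ≤ (r1 : ℤ) - 1) ∧ (∀ i, m1' i ≤ -1) ∧
      ((∑ i, m2' i) + ∑ i, m1' i = s) ∧ u = monom xa2 m2' * monom xa1 m1'} := by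
  rintro _ ⟨M2, M1, h2, h1, hM2, hM1, hs, rfl⟩
  obtain ⟨g2, hg2, rfl⟩ := M2.exists_monotone_coe_ofFn_eq h2
  obtain ⟨g1, hg1, rfl⟩ := M1.exists_monotone_coe_ofFn_eq h1
  refine ⟨g2, g1, hg2, hg1, fun i => hM2 _ (by simp), fun i => hM1 _ (by simp),
    by simpa [List.sum_ofFn] using hs, by rw [monom_eq_xMon, monom_eq_xMon]⟩

/-- Lemma 3.4 of the paper (truncation): for `r₁, r₂ ≥ 1`,
`m_{1,2} ≤ ⋯ ≤ m_{r₂,2}` with `m_{r₂,2} ≥ r₁` and `m_{1,1} ≤ ⋯ ≤ m_{r₁,1} ≤ −1`,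
the monomial `x_{α₂}(m_{1,2})⋯x_{α₂}(m_{r₂,2})x_{α₁}(m_{1,1})⋯x_{α₁}(m_{r₁,1})`
is a ℂ-linear combination of such monomials with `m'_{r₂,2} ≤ r₁ − 1`,
`m'_{r₁,1} ≤ −1` and the same total index sum, plus an element of U(n̄)n̄⁺. -/
theorem statement3 (r1 r2 : ℕ) (hr1 : 1 ≤ r1)
    (m2 : Fin r2 → ℤ) (m1 : Fin r1 → ℤ)
    (hm1neg : ∀ i, m1 i ≤ -1) :
    ∃ v ∈ Submodule.span ℂ {u : Uenv |
        ∃ (m2' : Fin r2 → ℤ) (m1' : Fin r1 → ℤ),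
          Monotone m2' ∧ Monotone m1' ∧
          (∀ i, m2' i ≤ (r1 : ℤ) - 1) ∧ (∀ i, m1' i ≤ -1) ∧
          ((∑ i, m2' i) + ∑ i, m1' i = (∑ i, m2 i) + ∑ i, m1 i) ∧
          u = monom xa2 m2' * monom xa1 m1'},
      ∃ w ∈ UNplus, monom xa2 m2 * monom xa1 m1 = v + w := by
  obtain ⟨n, rfl⟩ : ∃ n, r1 = n + 1 := ⟨r1 - 1, by omega⟩
  have hmem := xMon_mul_xMon_mem_truncSpan n (List.ofFn m2) (M1 := List.ofFn m1) (by simp)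
    (List.forall_mem_ofFn_iff.mpr hm1neg)
  simp only [Multiset.coe_card, List.length_ofFn, Multiset.sum_coe, List.sum_ofFn] at hmem
  obtain ⟨v, hv, w, hw, hvw⟩ := Submodule.mem_sup.mp hmem
  exact ⟨v, Submodule.span_mono (truncMonomials_subset _ _ _) hv, w, hw,
    by rw [monom_eq_xMon, monom_eq_xMon, hvw]⟩
end
end

section
/- Let r₁ ≥ 1, let n ≥ r₁ be an integer, and let m₁ ≤ ⋯ ≤ m_{r₁} ≤ −1 be integers. Then the alternating sum over all subsets S of {1,…,r₁}, Σ_{S ⊆ {1,…,r₁}} (−1)^{|S|} x_{α₂}(n − |S|) · x_{α₁}(m₁ + χ_S(1)) ⋯ x_{α₁}(m_{r₁} + χ_S(r₁)), lies in the left ideal U(n̄)n̄⁺, where χ_S(t) = 1 if t ∈ S and χ_S(t) = 0 otherwise. (Written out, this is x_{α₂}(n)x_{α₁}(m₁)⋯x_{α₁}(m_{r₁}) − Σ_t x_{α₂}(n−1)x_{α₁}(m₁)⋯x_{α₁}(m_t+1)⋯x_{α₁}(m_{r₁}) + ⋯ + (−1)^{r₁} x_{α₂}(n−r₁)x_{α₁}(m₁+1)⋯x_{α₁}(m_{r₁}+1).)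 -/
/-!
Write `f(p) = x_{α₂}(p)` and `g(q) = x_{α₁}(q)`. Since `[f(p), g(q)]` depends only on `p + q`,
`f(p) g(q) - f(p-1) g(q+1) = g(q) f(p) - g(q+1) f(p-1)`. Splitting the subsets `S` according to
whether they contain the first index, this identity pulls `g(m₁)` or `g(m₁ + 1)` out to the left:
the alternating sum `Σ(n; m₁, …, m_r)` equals `g(m₁) Σ(n; m₂, …, m_r) - g(m₁ + 1) Σ(n - 1; m₂, …, m_r)`.
By induction it is a left combination of the `f(k)` with `k ≥ n - r ≥ 0`, which lie in `U(n̄)n̄⁺`.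
-/

open scoped TensorProduct

attribute [local instance 100] LieRing.ofAssociativeRing

noncomputable section

open Finset

theorem Fin.sum_finset_succ {M : Type*} [AddCommMonoid M] {r : ℕ} (F : Finset (Fin (r + 1)) → M) :
    ∑ S, F S = ∑ T : Finset (Fin r), (F (T.image Fin.succ) + F (insert 0 (T.image Fin.succ))) := by
  have hinj := image_injOn_powerset_of_injOn (Fin.succ_injective r).injOn (s := univ)
  rw [← powerset_univ, Fin.univ_succ, cons_eq_insert, sum_powerset_insert (by simp), map_eq_image,
    powerset_image]
  simp only [Function.Embedding.coeFn_mk]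
  rw [sum_image hinj, sum_image hinj, powerset_univ, ← sum_add_distrib]

section AltSum

variable (R : Type*) {A : Type*} [CommRing R] [Ring A] [Algebra R A]

def altSum {r : ℕ} (f g : ℤ → A) (a : ℤ) (m : Fin r → ℤ) : A :=
  ∑ S : Finset (Fin r), (-1 : R) ^ #S •
    (f (a - #S) * (List.ofFn fun t => g (m t + if t ∈ S then 1 else 0)).prod)

variable {R}

theorem altSum_zero (f g : ℤ → A) (a : ℤ) (m : Fin 0 → ℤ) : altSum R f g a m = f a := by
  simp [altSum, univ_unique, Subsingleton.elim default ∅]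

theorem altSum_succ {f g : ℤ → A}
    (hc : ∀ p q, f p * g q - g q * f p = f (p - 1) * g (q + 1) - g (q + 1) * f (p - 1))
    {r : ℕ} (a : ℤ) (m : Fin (r + 1) → ℤ) :
    altSum R f g a m = g (m 0) * altSum R f g a (Fin.tail m)
      - g (m 0 + 1) * altSum R f g (a - 1) (Fin.tail m) := by
  simp only [altSum, mul_sum, ← sum_sub_distrib]
  rw [Fin.sum_finset_succ]
  refine sum_congr rfl fun T _ => ?_
  have h0 : (0 : Fin (r + 1)) ∉ T.image Fin.succ := by simp [Fin.succ_ne_zero]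
  have hcard : #(T.image Fin.succ) = #T := card_image_of_injective _ (Fin.succ_injective r)
  simp only [card_insert_of_notMem h0, hcard, List.ofFn_succ, List.prod_cons, if_neg h0,
    mem_insert, true_or, if_true, Fin.succ_ne_zero, false_or,
    (Fin.succ_injective r).mem_finset_image, Fin.tail, add_zero]
  set P := (List.ofFn fun t => g (m t.succ + if t ∈ T then 1 else 0)).prod
  have hswap : f (a - #T) * g (m 0) - f (a - #T - 1) * g (m 0 + 1) =
      g (m 0) * f (a - #T) - g (m 0 + 1) * f (a - #T - 1) :=
    sub_eq_sub_iff_sub_eq_sub.mpr (hc _ _)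
  rw [pow_succ, mul_neg_one, neg_smul, ← sub_eq_add_neg, ← smul_sub, mul_smul_comm, mul_smul_comm,
    ← smul_sub, Nat.cast_succ, ← sub_sub, sub_right_comm a 1]
  simp only [← mul_assoc, ← sub_mul, hswap]

theorem altSum_mem {f g : ℤ → A}
    (hc : ∀ p q, f p * g q - g q * f p = f (p - 1) * g (q + 1) - g (q + 1) * f (p - 1))
    (I : Ideal A) {r : ℕ} (a : ℤ) (m : Fin r → ℤ) (hf : ∀ k, a - r ≤ k → f k ∈ I) :
    altSum R f g a m ∈ I := by
  induction r generalizing a with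
  | zero => rw [altSum_zero]; exact hf a (by simp)
  | succ r ih =>
    rw [altSum_succ hc]
    refine I.sub_mem (I.mul_mem_left _ (ih a _ fun k hk => hf k ?_))
      (I.mul_mem_left _ (ih (a - 1) _ fun k hk => hf k ?_)) <;> push_cast <;> omega

end AltSum

theorem XX_mul_sub_mul_XX (x y : strictUpper) (p q : ℤ) :
    XX x p * XX y q - XX y q * XX x p =
      UniversalEnvelopingAlgebra.ι ℂ (L := loopN) (LaurentPolynomial.T (p + q) ⊗ₜ[ℂ] ⁅x, y⁆) := by
  rw [LaurentPolynomial.T_add, ← LieAlgebra.ExtendScalars.bracket_tmul, LieHom.map_lie,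
    Ring.lie_def, XX, XX]

theorem XX_mul_sub_mul_XX_shift (x y : strictUpper) (p q : ℤ) :
    XX x p * XX y q - XX y q * XX x p =
      XX x (p - 1) * XX y (q + 1) - XX y (q + 1) * XX x (p - 1) := by
  rw [XX_mul_sub_mul_XX, XX_mul_sub_mul_XX, sub_add_add_cancel]

theorem statement10_general (r1 : ℕ) (n : ℤ) (hn : (r1 : ℤ) ≤ n)
    (m : Fin r1 → ℤ) :
    (∑ S : Finset (Fin r1), ((-1 : ℂ) ^ S.card) •
        (XX xa2 (n - (S.card : ℤ)) *
          monom xa1 (fun t => m t + if t ∈ S then 1 else 0))) ∈ UNplus :=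
  altSum_mem (XX_mul_sub_mul_XX_shift xa2 xa1) UNplus n m fun k hk =>
    Ideal.subset_span ⟨xa2, k, by omega, rfl⟩

/-- The alternating-sum identity (3.28) of the paper: for `r₁ ≥ 1`, `n ≥ r₁` and
`m₁ ≤ ⋯ ≤ m_{r₁} ≤ −1`, the alternating sum over all subsets `S ⊆ {1,…,r₁}`,
`Σ_S (−1)^{|S|} x_{α₂}(n − |S|) x_{α₁}(m₁ + χ_S(1)) ⋯ x_{α₁}(m_{r₁} + χ_S(r₁))`,
lies in the left ideal U(n̄)n̄⁺. -/
theorem statement10 (r1 : ℕ) (hr1 : 1 ≤ r1) (n : ℤ) (hn : (r1 : ℤ) ≤ n)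
    (m : Fin r1 → ℤ) (hm : Monotone m) (hneg : ∀ i, m i ≤ -1) :
    (∑ S : Finset (Fin r1), ((-1 : ℂ) ^ S.card) •
        (XX xa2 (n - (S.card : ℤ)) *
          monom xa1 (fun t => m t + if t ∈ S then 1 else 0))) ∈ UNplus :=
  statement10_general r1 n hn m

end
end
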